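/- arXiv:2502.19358 — 4 statements merged into one kernel-verified Lean document; each statement's English description precedes it below -/
import Mathlib

section
/- Let p : ℂ → ℂ be a monic polynomial of degree d ≥ 2 and a ∈ ℂ, a ≠ 0, and let H(x,y) = (y, p(y) - a x). Then there exists R > 0 such that H(V_R⁺) ⊆ V_R⁺, where V_R⁺ = {(x,y) ∈ ℂ² : |y| ≥ max(|x|, R)}. Moreover R can be chosen so that |p(y) - a x| ≥ 2|y| for all (x,y) ∈ V_R⁺. -/
/-- filtration property: there is R > 0 with H(V_R⁺) ⊆ V_R⁺,
and moreover |p(y) - a x| ≥ 2|y| on V_R⁺. -/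
theorem stmt_2 (d : ℕ) (hd : 2 ≤ d) (p : Polynomial ℂ) (hp : p.Monic)
    (hdeg : p.natDegree = d) (a : ℂ) (ha : a ≠ 0)
    (H : ℂ × ℂ → ℂ × ℂ)
    (hH : ∀ x y : ℂ, H (x, y) = (y, p.eval y - a * x)) :
    ∃ R : ℝ, 0 < R ∧
      (∀ z : ℂ × ℂ, max ‖z.1‖ R ≤ ‖z.2‖ → max ‖(H z).1‖ R ≤ ‖(H z).2‖) ∧
      (∀ x y : ℂ, max ‖x‖ R ≤ ‖y‖ → 2 * ‖y‖ ≤ ‖p.eval y - a * x‖) := by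
  set q := p.eraseLead with hq
  have hpe : q + Polynomial.C p.leadingCoeff * Polynomial.X ^ p.natDegree = p :=
    p.eraseLead_add_C_mul_X_pow
  rw [hp.leadingCoeff, hdeg, map_one, one_mul] at hpe
  have hpq : ∀ y : ℂ, p.eval y = y ^ d + q.eval y := by
    intro y
    rw [← hpe]
    simp [add_comm]
  have hqd : q.natDegree ≤ d - 1 := by
    have := p.eraseLead_natDegree_le
    rwa [hdeg] at this
  set C := ∑ i ∈ Finset.range (q.natDegree + 1), ‖q.coeff i‖ with hC
  have hC0 : 0 ≤ C := Finset.sum_nonneg fun i _ => norm_nonneg _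
  have hqbound : ∀ y : ℂ, 1 ≤ ‖y‖ → ‖q.eval y‖ ≤ C * ‖y‖ ^ (d - 1) := by
    intro y hy
    rw [Polynomial.eval_eq_sum_range]
    calc ‖∑ i ∈ Finset.range (q.natDegree + 1), q.coeff i * y ^ i‖
        ≤ ∑ i ∈ Finset.range (q.natDegree + 1), ‖q.coeff i * y ^ i‖ :=
          norm_sum_le _ _
      _ ≤ ∑ i ∈ Finset.range (q.natDegree + 1), ‖q.coeff i‖ * ‖y‖ ^ (d - 1) := by
          apply Finset.sum_le_sum
          intro i hi
          rw [norm_mul, norm_pow]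
          apply mul_le_mul_of_nonneg_left _ (norm_nonneg _)
          apply pow_le_pow_right₀ hy
          have := Finset.mem_range.mp hi
          omega
      _ = C * ‖y‖ ^ (d - 1) := by rw [← Finset.sum_mul]
  set R := max 1 (C + 2 + ‖a‖) with hR
  have hR0 : (0:ℝ) < R := lt_of_lt_of_le one_pos (le_max_left _ _)
  have key : ∀ x y : ℂ, max ‖x‖ R ≤ ‖y‖ → 2 * ‖y‖ ≤ ‖p.eval y - a * x‖ := by
    intro x y h
    have hx : ‖x‖ ≤ ‖y‖ := le_trans (le_max_left _ _) h
    have hRy : R ≤ ‖y‖ := le_trans (le_max_right _ _) h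
    have h1 : 1 ≤ ‖y‖ := le_trans (le_max_left _ _) hRy
    have h2 : C + 2 + ‖a‖ ≤ ‖y‖ := le_trans (le_max_right _ _) hRy
    have hpow : ‖y‖ ≤ ‖y‖ ^ (d - 1) := by
      calc ‖y‖ = ‖y‖ ^ 1 := (pow_one _).symm
        _ ≤ ‖y‖ ^ (d - 1) := pow_le_pow_right₀ h1 (by omega)
    have hd' : ‖y‖ ^ d = ‖y‖ ^ (d - 1) * ‖y‖ := by
      rw [← pow_succ]
      congr 1
      omega
    have hkey : ‖y‖ * (2 + ‖a‖) ≤ ‖y‖ ^ (d - 1) * (‖y‖ - C) := by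
      apply mul_le_mul hpow (by linarith) (by positivity) (by positivity)
    have h3 : ‖y‖ ^ d - ‖q.eval y‖ ≤ ‖p.eval y‖ := by
      rw [hpq]
      have := norm_sub_norm_le (y ^ d) (-(q.eval y))
      rw [sub_neg_eq_add, norm_neg, norm_pow] at this
      exact this
    have h4 : ‖a * x‖ ≤ ‖a‖ * ‖y‖ := by
      rw [norm_mul]
      exact mul_le_mul_of_nonneg_left hx (norm_nonneg a)
    have h5 := hqbound y h1
    have h6 := norm_sub_norm_le (p.eval y) (a * x)
    nlinarith [norm_nonneg a, norm_nonneg y]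
  refine ⟨R, hR0, ?_, key⟩
  intro z hz
  have hz' := hH z.1 z.2
  rw [Prod.mk.eta] at hz'
  rw [hz']
  have h2y := key z.1 z.2 hz
  have hRy : R ≤ ‖z.2‖ := le_trans (le_max_right _ _) hz
  have hy0 : 0 ≤ ‖z.2‖ := norm_nonneg _
  simp only
  rw [max_le_iff]
  constructor <;> linarith
end

section
/- Let Q ∈ ℂ[X] and d ≥ 2. Define L' = {α ∈ ℂ : α^{d²-1} = 1 and there exists c ∈ ℂ with α^{d+1}·Q(ζ) = Q(α·ζ) + c for all ζ}. Then L' is a subgroup of the group of (d²-1)-th roots of unity. Moreover, if α, β ∈ L' with associated constants c_α, c_β, then the constant associated to αβ is c_{αβ} = β^{d+1}·c_α + c_β. -/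
namespace Polynomial

def ScalingRelation {R : Type*} [CommSemiring R] (Q : R[X]) (m : ℕ) (α c : R) : Prop :=
  ∀ ζ : R, α ^ m * Q.eval ζ = Q.eval (α * ζ) + c

namespace ScalingRelation

variable {R : Type*}

theorem one [CommSemiring R] (Q : R[X]) (m : ℕ) : ScalingRelation Q m 1 0 :=
  fun ζ => by simp

theorem mul [CommSemiring R] {Q : R[X]} {m : ℕ} {α β cα cβ : R}
    (hα : ScalingRelation Q m α cα) (hβ : ScalingRelation Q m β cβ) :
    ScalingRelation Q m (α * β) (β ^ m * cα + cβ) := by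
  intro ζ
  calc (α * β) ^ m * Q.eval ζ = β ^ m * (α ^ m * Q.eval ζ) := by ring
    _ = β ^ m * Q.eval (α * ζ) + β ^ m * cα := by rw [hα ζ, mul_add]
    _ = Q.eval (α * β * ζ) + (β ^ m * cα + cβ) := by
      rw [hβ (α * ζ), mul_left_comm β α ζ, ← mul_assoc]; ring

theorem inv [Field R] {Q : R[X]} {m : ℕ} {α c : R} (hα0 : α ≠ 0)
    (hα : ScalingRelation Q m α c) : ScalingRelation Q m α⁻¹ (-α⁻¹ ^ m * c) := by
  intro ζ
  have h := hα (α⁻¹ * ζ)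
  rw [mul_inv_cancel_left₀ hα0] at h
  have hpow : α ^ m * α⁻¹ ^ m = 1 := by rw [← mul_pow, mul_inv_cancel₀ hα0, one_pow]
  linear_combination -α⁻¹ ^ m * h + Q.eval (α⁻¹ * ζ) * hpow

end ScalingRelation

end Polynomial

open Polynomial in
theorem stmt_7_general (Q : Polynomial ℂ) (d : ℕ) :
    let L' : Set ℂ := {α : ℂ | α ^ (d ^ 2 - 1) = 1 ∧
      ∃ c : ℂ, ∀ ζ : ℂ, α ^ (d + 1) * Q.eval ζ = Q.eval (α * ζ) + c}
    (∀ α ∈ L', α ^ (d ^ 2 - 1) = 1) ∧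
    (1 : ℂ) ∈ L' ∧
    (∀ α ∈ L', ∀ β ∈ L', α * β ∈ L') ∧
    (∀ α ∈ L', α⁻¹ ∈ L') ∧
    (∀ α β cα cβ : ℂ, α ∈ L' → β ∈ L' →
      (∀ ζ : ℂ, α ^ (d + 1) * Q.eval ζ = Q.eval (α * ζ) + cα) →
      (∀ ζ : ℂ, β ^ (d + 1) * Q.eval ζ = Q.eval (β * ζ) + cβ) →
      (∀ ζ : ℂ, (α * β) ^ (d + 1) * Q.eval ζ
        = Q.eval ((α * β) * ζ) + (β ^ (d + 1) * cα + cβ))) := by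
  intro L'
  refine ⟨fun α hα => hα.1, ⟨one_pow _, 0, ScalingRelation.one Q (d + 1)⟩, ?_, ?_,
    fun α β cα cβ _ _ => ScalingRelation.mul⟩
  · rintro α ⟨hα1, cα, hα⟩ β ⟨hβ1, cβ, hβ⟩
    exact ⟨by rw [mul_pow, hα1, hβ1, one_mul], _, ScalingRelation.mul hα hβ⟩
  · rintro α hαL
    obtain rfl | hα0 := eq_or_ne α 0
    · simpa using hαL -- `0⁻¹ = 0` in Lean
    obtain ⟨hα1, c, hα⟩ := hαL
    exact ⟨by rw [inv_pow, hα1, inv_one], _, ScalingRelation.inv hα0 hα⟩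

/-- L' is a subgroup of the (d²-1)-th roots of unity, and the
constant associated to a product is c_{αβ} = β^{d+1} c_α + c_β. -/
theorem stmt_7 (Q : Polynomial ℂ) (d : ℕ) (hd : 2 ≤ d) :
    let L' : Set ℂ := {α : ℂ | α ^ (d ^ 2 - 1) = 1 ∧
      ∃ c : ℂ, ∀ ζ : ℂ, α ^ (d + 1) * Q.eval ζ = Q.eval (α * ζ) + c}
    (∀ α ∈ L', α ^ (d ^ 2 - 1) = 1) ∧
    (1 : ℂ) ∈ L' ∧
    (∀ α ∈ L', ∀ β ∈ L', α * β ∈ L') ∧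
    (∀ α ∈ L', α⁻¹ ∈ L') ∧
    (∀ α β cα cβ : ℂ, α ∈ L' → β ∈ L' →
      (∀ ζ : ℂ, α ^ (d + 1) * Q.eval ζ = Q.eval (α * ζ) + cα) →
      (∀ ζ : ℂ, β ^ (d + 1) * Q.eval ζ = Q.eval (β * ζ) + cβ) →
      (∀ ζ : ℂ, (α * β) ^ (d + 1) * Q.eval ζ
        = Q.eval ((α * β) * ζ) + (β ^ (d + 1) * cα + cβ))) :=
  stmt_7_general Q d
end

section
/- Let d ≥ 2 be an integer and z ∈ ℂ with |z| = 1. If z^{dⁿ} → 1 as n → ∞, then there exists N ≥ 0 with z^{d^N} = 1; in particular z is a root of unity. -/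
open Filter Topology

/-!
Put `w n = z ^ d ^ n`. Since `w n → 1`, eventually `log (w n)` is so small that
`log (w (n + 1)) = log (w n ^ d) = d * log (w n)`: from then on `‖log (w n)‖` is non-decreasing
and tends to `0`, so it vanishes, and `w n = exp (log (w n)) = 1`.
-/

lemma eventually_eq_zero_of_tendsto_zero_of_norm_le_succ {E : Type*} [NormedAddCommGroup E]
    {f : ℕ → E} (hf : Tendsto f atTop (𝓝 0)) (hmono : ∀ᶠ n in atTop, ‖f n‖ ≤ ‖f (n + 1)‖) :
    ∀ᶠ n in atTop, f n = 0 := by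
  obtain ⟨N, hN⟩ := eventually_atTop.1 hmono
  refine eventually_atTop.2 ⟨N, fun n hn => norm_le_zero_iff.1 ?_⟩
  have hmono' : Monotone fun k => ‖f (k + n)‖ :=
    monotone_nat_of_le_succ fun k => by simpa [Nat.add_right_comm] using hN (k + n) (by omega)
  have htail : Tendsto (fun k => ‖f (k + n)‖) atTop (𝓝 0) := by
    simpa only [norm_zero] using ((tendsto_add_atTop_iff_nat n).2 hf).norm
  simpa using hmono'.ge_of_tendsto htail 0

namespace Complex

lemma log_pow_of_norm_mul_log_lt_pi {w : ℂ} (hw : w ≠ 0) {n : ℕ} (h : ‖n * log w‖ < Real.pi) :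
    log (w ^ n) = n * log w := by
  obtain ⟨h₁, h₂⟩ := abs_lt.1 ((abs_im_le_norm _).trans_lt h)
  calc log (w ^ n) = log (exp (n * log w)) := by rw [exp_nat_mul, exp_log hw]
    _ = n * log w := log_exp h₁ h₂.le

end Complex

theorem stmt_14_general (d : ℕ) (hd : 2 ≤ d) (z : ℂ)
    (hlim : Tendsto (fun n : ℕ => z ^ d ^ n) atTop (nhds 1)) :
    (∃ N : ℕ, z ^ d ^ N = 1) ∧ (∃ m : ℕ, 0 < m ∧ z ^ m = 1) := by
  set w : ℕ → ℂ := fun n => z ^ d ^ n with hw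
  have hlog : Tendsto (fun n => Complex.log (w n)) atTop (𝓝 0) := by
    simpa using hlim.clog (by simp)
  have hne : ∀ᶠ n in atTop, w n ≠ 0 := hlim.eventually_ne one_ne_zero
  have hsmall : ∀ᶠ n in atTop, ‖(d : ℂ) * Complex.log (w n)‖ < Real.pi := by
    have := (hlog.const_mul (d : ℂ)).norm
    rw [mul_zero, norm_zero] at this
    exact this.eventually (gt_mem_nhds Real.pi_pos)
  have hexpand : ∀ᶠ n in atTop, ‖Complex.log (w n)‖ ≤ ‖Complex.log (w (n + 1))‖ := by
    filter_upwards [hne, hsmall] with n hn hn'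
    rw [show w (n + 1) = w n ^ d by simp [hw, pow_succ, pow_mul],
      Complex.log_pow_of_norm_mul_log_lt_pi hn hn', norm_mul, Complex.norm_natCast]
    exact le_mul_of_one_le_left (norm_nonneg _) (by exact_mod_cast (by omega : 1 ≤ d))
  obtain ⟨N, hN, hlogN⟩ :=
    (hne.and (eventually_eq_zero_of_tendsto_zero_of_norm_le_succ hlog hexpand)).exists
  have hzN : w N = 1 := by rw [← Complex.exp_log hN, hlogN, Complex.exp_zero]
  exact ⟨⟨N, hzN⟩, d ^ N, by positivity, hzN⟩

/-- if |z| = 1 and z^{dⁿ} → 1, then z^{d^N} = 1 for some N; in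
particular z is a root of unity. -/
theorem stmt_14 (d : ℕ) (hd : 2 ≤ d) (z : ℂ) (hz : ‖z‖ = 1)
    (hlim : Tendsto (fun n : ℕ => z ^ d ^ n) atTop (nhds 1)) :
    (∃ N : ℕ, z ^ d ^ N = 1) ∧ (∃ m : ℕ, 0 < m ∧ z ^ m = 1) :=
  stmt_14_general d hd z hlim
end

section
/- Let H : ℂ² → ℂ² be a bijection, d ≥ 2, m ≥ 1, and let G : ℂ² → ℝ be a continuous nonnegative function satisfying G(H(w)) = d⁻¹·G(w) for all w (equivalently G(H⁻¹(w)) = d·G(w)). Let f : ℂ² → ℂ² be continuous with f ∘ H^m = H^m ∘ f. If z ∈ ℂ² has bounded backward orbit (∃ M, ∀ n ≥ 0, ‖H⁻ⁿ(z)‖ ≤ M), then G(f(z)) = 0. -/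
/-- if G(H(w)) = G(w)/d, f is continuous and commutes with H^m,
and z has bounded backward orbit, then G(f(z)) = 0. -/
theorem stmt_17 (H Hinv : ℂ × ℂ → ℂ × ℂ)
    (hleft : Function.LeftInverse Hinv H)
    (hright : Function.RightInverse Hinv H)
    (d m : ℕ) (hd : 2 ≤ d) (hm : 1 ≤ m)
    (G : ℂ × ℂ → ℝ) (hGc : Continuous G) (hGnn : ∀ w, 0 ≤ G w)
    (hGfunc : ∀ w : ℂ × ℂ, G (H w) = G w / d)
    (f : ℂ × ℂ → ℂ × ℂ) (hfc : Continuous f)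
    (hcomm : ∀ w : ℂ × ℂ, f (H^[m] w) = H^[m] (f w))
    (z : ℂ × ℂ) (hz : ∃ M : ℝ, ∀ n : ℕ, ‖Hinv^[n] z‖ ≤ M) :
    G (f z) = 0 := by
  obtain ⟨M, hM⟩ := hz
  have hd1 : (1:ℝ) < d := by exact_mod_cast lt_of_lt_of_le one_lt_two hd
  have hGk : ∀ (k : ℕ) (w), G (H^[k] w) = G w / (d:ℝ)^k := by
    intro k
    induction k with
    | zero => simp
    | succ k ih =>
      intro w
      rw [Function.iterate_succ_apply', hGfunc, ih, pow_succ, div_div]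
  have hcommn : ∀ (n : ℕ) (w), f ((H^[m])^[n] w) = (H^[m])^[n] (f w) := by
    intro n
    induction n with
    | zero => simp
    | succ n ih =>
      intro w
      rw [Function.iterate_succ_apply, ih, hcomm, ← Function.iterate_succ_apply]
  obtain ⟨x0, hx0, hC⟩ := (isCompact_closedBall (0 : ℂ × ℂ) M).exists_isMaxOn
    ⟨z, by simpa [Metric.mem_closedBall, dist_zero_right] using hM 0⟩
    (hGc.comp hfc).continuousOn
  set C := G (f x0) with hCdef
  have hC' : ∀ y ∈ Metric.closedBall (0 : ℂ × ℂ) M, G (f y) ≤ C := fun y hy => hC hy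
  have key : ∀ n : ℕ, G (f z) * (d:ℝ)^(m*n) ≤ C := by
    intro n
    have hz' : z = H^[m*n] (Hinv^[m*n] z) := ((hright.iterate (m*n)) _).symm
    have heq : G (f z) = G (f (Hinv^[m*n] z)) / (d:ℝ)^(m*n) := by
      conv_lhs => rw [hz']
      rw [Function.iterate_mul, hcommn, ← Function.iterate_mul, hGk]
    rw [heq, div_mul_cancel₀]
    · exact hC' _ (by simpa [Metric.mem_closedBall, dist_zero_right] using hM (m*n))
    · positivity
  by_contra hne
  have hpos : 0 < G (f z) := lt_of_le_of_ne (hGnn _) (Ne.symm hne)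
  obtain ⟨n, hn⟩ := pow_unbounded_of_one_lt (C / G (f z)) hd1
  have h1 : (d:ℝ)^n ≤ (d:ℝ)^(m*n) :=
    pow_le_pow_right₀ (le_of_lt hd1) (Nat.le_mul_of_pos_left n hm)
  have h2 : C < G (f z) * (d:ℝ)^n := by
    rw [div_lt_iff₀ hpos] at hn
    nlinarith
  have h3 := key n
  nlinarith
end
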